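/- arXiv:2106.10388 — 3 statements merged into one kernel-verified Lean document; each statement's English description precedes it below -/
import Mathlib

section
/- For every integer d ≥ 3, the equation ∏_{i=0}^{2} (1 − (1−p)^{⌊(d+i)/3⌋}) = 2 − ∑_{i=0}^{2} (1−p)^{⌊(d+i)/3⌋} has a unique solution p in the open interval (0,1). -/
/-!
Put `u = 1 - p`. For positive exponents `nᵢ`, the map
`u ↦ ∏ (1 - u ^ nᵢ) + ∑ u ^ nᵢ` is strictly increasing on `[0, 1]`: adding the index `j`
to the index set adds `u ^ n_j * (1 - ∏ (1 - u ^ nᵢ))`, a product of two nonnegative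
nondecreasing factors of which the first is strictly increasing and the second is positive
once the remaining index set is nonempty. It runs from `1` at `u = 0` to the number of indices
at `u = 1`, so it takes the value `2` exactly once when there are three indices.
-/

open Finset

section

variable {ι : Type*} (s : Finset ι) (n : ι → ℕ)

noncomputable def prodOneSubPowAddSumPow (u : ℝ) : ℝ :=
  ∏ i ∈ s, (1 - u ^ n i) + ∑ i ∈ s, u ^ n i

variable {s n}

lemma prod_one_sub_pow_mem_Icc {u : ℝ} (hu : u ∈ Set.Icc 0 1) :
    ∏ i ∈ s, (1 - u ^ n i) ∈ Set.Icc 0 1 :=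
  ⟨prod_nonneg fun _ _ => sub_nonneg.2 (pow_le_one₀ hu.1 hu.2),
    prod_le_one (fun _ _ => sub_nonneg.2 (pow_le_one₀ hu.1 hu.2))
      fun _ _ => sub_le_self 1 (pow_nonneg hu.1 _)⟩

lemma antitoneOn_prod_one_sub_pow :
    AntitoneOn (fun u : ℝ => ∏ i ∈ s, (1 - u ^ n i)) (Set.Icc 0 1) :=
  fun _ hu _ hv huv => prod_le_prod (fun _ _ => sub_nonneg.2 (pow_le_one₀ hv.1 hv.2))
    fun _ _ => sub_le_sub_left (pow_le_pow_left₀ hu.1 huv _) 1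

lemma prod_one_sub_pow_lt_one {k : ι} (hk : k ∈ s) {u : ℝ} (hu : u ∈ Set.Ioc 0 1) :
    ∏ i ∈ s, (1 - u ^ n i) < 1 := by
  classical
  calc ∏ i ∈ s, (1 - u ^ n i)
      = (1 - u ^ n k) * ∏ i ∈ s.erase k, (1 - u ^ n i) := (mul_prod_erase s _ hk).symm
    _ ≤ 1 - u ^ n k := mul_le_of_le_one_right (sub_nonneg.2 (pow_le_one₀ hu.1.le hu.2))
        (prod_one_sub_pow_mem_Icc (Set.Ioc_subset_Icc_self hu)).2
    _ < 1 := sub_lt_self 1 (pow_pos hu.1 _)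

lemma prodOneSubPowAddSumPow_insert [DecidableEq ι] {j : ι} (hj : j ∉ s) (u : ℝ) :
    prodOneSubPowAddSumPow (insert j s) n u =
      prodOneSubPowAddSumPow s n u + u ^ n j * (1 - ∏ i ∈ s, (1 - u ^ n i)) := by
  rw [prodOneSubPowAddSumPow, prodOneSubPowAddSumPow, prod_insert hj, sum_insert hj]
  ring

lemma monotoneOn_prodOneSubPowAddSumPow :
    MonotoneOn (prodOneSubPowAddSumPow s n) (Set.Icc 0 1) := by
  classical
  induction s using Finset.induction_on with
  | empty => intro u _ v _ _; simp [prodOneSubPowAddSumPow]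
  | insert j s hj ih =>
    intro u hu v hv huv
    rw [prodOneSubPowAddSumPow_insert hj, prodOneSubPowAddSumPow_insert hj]
    gcongr ?_ + ?_
    · exact ih hu hv huv
    · exact mul_le_mul (pow_le_pow_left₀ hu.1 huv _)
        (sub_le_sub_left (antitoneOn_prod_one_sub_pow hu hv huv) 1)
        (sub_nonneg.2 (prod_one_sub_pow_mem_Icc hu).2) (pow_nonneg hv.1 _)

lemma strictMonoOn_prodOneSubPowAddSumPow (hn : ∀ i ∈ s, n i ≠ 0) (hs : 1 < #s) :
    StrictMonoOn (prodOneSubPowAddSumPow s n) (Set.Icc 0 1) := by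
  classical
  obtain ⟨j, hj⟩ := card_pos.1 (zero_lt_one.trans hs)
  obtain ⟨k, hk⟩ : (s.erase j).Nonempty := by
    rw [← card_pos, card_erase_of_mem hj]; omega
  intro u hu v hv huv
  rw [← insert_erase hj, prodOneSubPowAddSumPow_insert (notMem_erase j s),
    prodOneSubPowAddSumPow_insert (notMem_erase j s)]
  refine add_lt_add_of_le_of_lt (monotoneOn_prodOneSubPowAddSumPow hu hv huv.le) ?_
  rw [mul_comm, mul_comm (v ^ _)]
  exact mul_lt_mul' (sub_le_sub_left (antitoneOn_prod_one_sub_pow hu hv huv.le) 1)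
    (pow_lt_pow_left₀ huv hu.1 (hn j hj)) (pow_nonneg hu.1 _)
    (sub_pos.2 (prod_one_sub_pow_lt_one hk ⟨hu.1.trans_lt huv, hv.2⟩))

lemma prodOneSubPowAddSumPow_zero (hn : ∀ i ∈ s, n i ≠ 0) :
    prodOneSubPowAddSumPow s n 0 = 1 := by
  simp +contextual [prodOneSubPowAddSumPow, zero_pow, hn]

lemma prodOneSubPowAddSumPow_one (hs : s.Nonempty) : prodOneSubPowAddSumPow s n 1 = #s := by
  simp [prodOneSubPowAddSumPow, hs.ne_empty]

theorem existsUnique_prodOneSubPowAddSumPow_eq (hn : ∀ i ∈ s, n i ≠ 0) (hs : 1 < #s) {c : ℝ}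
    (hc : c ∈ Set.Ioo 1 (#s : ℝ)) :
    ∃! u, u ∈ Set.Ioo 0 1 ∧ prodOneSubPowAddSumPow s n u = c := by
  have hcont : Continuous (prodOneSubPowAddSumPow s n) := by
    unfold prodOneSubPowAddSumPow; fun_prop
  have hivt := intermediate_value_Ioo zero_le_one hcont.continuousOn
  rw [prodOneSubPowAddSumPow_zero hn,
    prodOneSubPowAddSumPow_one (card_pos.1 (zero_lt_one.trans hs))] at hivt
  obtain ⟨u, hu, hGu⟩ := hivt hc
  refine ⟨u, ⟨hu, hGu⟩, fun v ⟨hv, hGv⟩ => ?_⟩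
  exact (strictMonoOn_prodOneSubPowAddSumPow hn hs).injOn (Set.Ioo_subset_Icc_self hv)
    (Set.Ioo_subset_Icc_self hu) (hGv.trans hGu.symm)

end

theorem unique_solution_triangular_equation (d : ℕ) (hd : 3 ≤ d) :
    ∃! p : ℝ, p ∈ Set.Ioo (0 : ℝ) 1 ∧
      (∏ i ∈ Finset.range 3, (1 - (1 - p) ^ ((d + i) / 3))) =
        2 - ∑ i ∈ Finset.range 3, (1 - p) ^ ((d + i) / 3) := by
  have hn : ∀ i ∈ range 3, (d + i) / 3 ≠ 0 := fun i _ => by omega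
  have hsol := existsUnique_prodOneSubPowAddSumPow_eq hn (by simp) (c := 2) (by norm_num)
  refine (Equiv.subLeft (1 : ℝ)).existsUnique_congr (fun p => ?_) |>.2 hsol
  simp only [Equiv.subLeft_apply, prodOneSubPowAddSumPow, Set.mem_Ioo, ← eq_sub_iff_add_eq]
  constructor <;> rintro ⟨⟨h0, h1⟩, h⟩ <;> exact ⟨⟨by linarith, by linarith⟩, h⟩
end

section
/- For any c ∈ (0,1) and integer d ≥ 1, the equation p = c(p + (1−p)^{2d/(2d−1)}) has a unique solution in (0,1). -/
/-! `crossoverGap c a` falls strictly and continuously on `[0, 1]` from `c > 0` to `c - 1 < 0`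
(for `a > 0`), so it has exactly one zero there. -/

open Set

noncomputable def crossoverGap (c a p : ℝ) : ℝ := c * (p + (1 - p) ^ a) - p

section CrossoverGap

variable {a c : ℝ}

theorem strictAntiOn_crossoverGap (ha : 0 ≤ a) (hc0 : 0 ≤ c) (hc1 : c < 1) :
    StrictAntiOn (crossoverGap c a) (Iic 1) := by
  intro p hp q hq hpq
  have hpow : (1 - q) ^ a ≤ (1 - p) ^ a :=
    Real.rpow_le_rpow (by linarith [mem_Iic.mp hq]) (by linarith) ha
  have := mul_le_mul_of_nonneg_left hpow hc0
  unfold crossoverGap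
  nlinarith

theorem continuous_crossoverGap (ha : 0 ≤ a) : Continuous (crossoverGap c a) := by
  unfold crossoverGap
  fun_prop (disch := exact ha)

theorem crossoverGap_eq_zero_iff {p : ℝ} : crossoverGap c a p = 0 ↔ p = c * (p + (1 - p) ^ a) := by
  unfold crossoverGap
  constructor <;> intro h <;> linarith

theorem existsUnique_mem_Ioo_eq_mul_add_one_sub_rpow (ha : 0 < a) (hc : c ∈ Ioo (0 : ℝ) 1) :
    ∃! p : ℝ, p ∈ Ioo (0 : ℝ) 1 ∧ p = c * (p + (1 - p) ^ a) := by
  obtain ⟨hc0, hc1⟩ := hc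
  have hg0 : crossoverGap c a 0 = c := by simp [crossoverGap]
  have hg1 : crossoverGap c a 1 = c - 1 := by simp [crossoverGap, Real.zero_rpow ha.ne']
  obtain ⟨p, hp, hgp⟩ : ∃ p ∈ Ioo (0 : ℝ) 1, crossoverGap c a p = 0 := by
    have hivt := intermediate_value_Ioo' zero_le_one (continuous_crossoverGap (c := c) ha.le).continuousOn
    rw [hg0, hg1] at hivt
    exact hivt ⟨by linarith, hc0⟩
  refine ⟨p, ⟨hp, crossoverGap_eq_zero_iff.mp hgp⟩, fun q ⟨hq, hq_eq⟩ => ?_⟩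
  refine (strictAntiOn_crossoverGap ha.le hc0.le hc1).injOn (mem_Iic.mpr hq.2.le)
    (mem_Iic.mpr hp.2.le) ?_
  rw [hgp, crossoverGap_eq_zero_iff.mpr hq_eq]

end CrossoverGap

theorem crossover_fixed_point_site (d : ℕ) (hd : 1 ≤ d) (c : ℝ) (hc : c ∈ Set.Ioo (0 : ℝ) 1) :
    ∃! p : ℝ, p ∈ Set.Ioo (0 : ℝ) 1 ∧
      p = c * (p + (1 - p) ^ ((2 * (d : ℝ)) / (2 * (d : ℝ) - 1))) := by
  have hd' : (1 : ℝ) ≤ d := by exact_mod_cast hd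
  exact existsUnique_mem_Ioo_eq_mul_add_one_sub_rpow (div_pos (by linarith) (by linarith)) hc
end

section
/- If c_d ∈ (0,1) is a sequence with d·c_d → 1 as d → ∞, and p_d solves p_d = c_d(p_d + (1−p_d)^{(d+1)/d}) in (0,1), then d·p_d → 1 as d → ∞. -/
/-!
Writing `q = 1 - p` and `α = (d + 1) / d ∈ [1, 2]`, the bounds `q ^ 2 ≤ q ^ α ≤ q` squeeze every
solution of `p = c (p + q ^ α)` between `c (1 - c)` and `c`. Multiplying by `d`, both bounds tend
to `1` because `d c_d → 1` forces `c_d → 0`.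
-/

open Filter Topology

section FixedPoint

variable {c p α : ℝ}

theorem le_of_eq_mul_add_one_sub_rpow (hc : 0 ≤ c) (hp₀ : 0 ≤ p) (hp₁ : p ≤ 1) (hα : 1 ≤ α)
    (h : p = c * (p + (1 - p) ^ α)) : p ≤ c := by
  have hq : (1 - p) ^ α ≤ 1 - p := Real.rpow_le_self_of_le_one (by linarith) (by linarith) hα
  calc p = c * (p + (1 - p) ^ α) := h
    _ ≤ c * (p + (1 - p)) := by gcongr
    _ = c := by ring

theorem mul_one_sub_le_of_eq_mul_add_one_sub_rpow (hc₀ : 0 ≤ c) (hc₁ : c ≤ 1) (hp₀ : 0 ≤ p)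
    (hp₁ : p ≤ 1) (hα₁ : 1 ≤ α) (hα₂ : α ≤ 2) (h : p = c * (p + (1 - p) ^ α)) :
    c * (1 - c) ≤ p := by
  have hpc : p ≤ c := le_of_eq_mul_add_one_sub_rpow hc₀ hp₀ hp₁ hα₁ h
  have hq : (1 - c) ^ 2 ≤ (1 - p) ^ α :=
    calc (1 - c) ^ 2 ≤ (1 - p) ^ 2 := pow_le_pow_left₀ (by linarith) (by linarith) 2
      _ = (1 - p) ^ (2 : ℝ) := (Real.rpow_two _).symm
      _ ≤ (1 - p) ^ α :=
        Real.rpow_le_rpow_of_exponent_ge' (by linarith) (by linarith) (by linarith) hα₂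
  have hmul : (1 - c) * (c * (1 - c)) ≤ (1 - c) * p :=
    calc (1 - c) * (c * (1 - c)) = c * (1 - c) ^ 2 := by ring
      _ ≤ c * (1 - p) ^ α := mul_le_mul_of_nonneg_left hq hc₀
      _ = (1 - c) * p := by linear_combination -h
  rcases hc₁.lt_or_eq with hc₁ | rfl
  · exact le_of_mul_le_mul_left hmul (by linarith)
  · simpa using hp₀

end FixedPoint

theorem one_le_add_one_div_self {d : ℝ} (hd : 1 ≤ d) : 1 ≤ (d + 1) / d := by
  rw [le_div_iff₀ (by linarith)]
  linarith

theorem add_one_div_self_le_two {d : ℝ} (hd : 1 ≤ d) : (d + 1) / d ≤ 2 := by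
  rw [div_le_iff₀ (by linarith)]
  linarith

theorem tendsto_zero_of_tendsto_natCast_mul {c : ℕ → ℝ} {a : ℝ}
    (h : Tendsto (fun n : ℕ => (n : ℝ) * c n) atTop (𝓝 a)) : Tendsto c atTop (𝓝 0) := by
  have hprod := h.mul tendsto_one_div_atTop_nhds_zero_nat
  rw [mul_zero] at hprod
  refine hprod.congr' ?_
  filter_upwards [eventually_ne_atTop 0] with n hn
  field_simp

theorem crossover_asymptotics (c p : ℕ → ℝ)
    (hc : ∀ d, 1 ≤ d → c d ∈ Set.Ioo (0 : ℝ) 1)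
    (hclim : Tendsto (fun d : ℕ => (d : ℝ) * c d) atTop (nhds 1))
    (hp : ∀ d, 1 ≤ d → p d ∈ Set.Ioo (0 : ℝ) 1)
    (hpeq : ∀ d, 1 ≤ d → p d = c d * (p d + (1 - p d) ^ (((d : ℝ) + 1) / d))) :
    Tendsto (fun d : ℕ => (d : ℝ) * p d) atTop (nhds 1) := by
  have hbounds : ∀ d, 1 ≤ d → c d * (1 - c d) ≤ p d ∧ p d ≤ c d := by
    intro d hd
    obtain ⟨hc₀, hc₁⟩ := hc d hd
    obtain ⟨hp₀, hp₁⟩ := hp d hd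
    have hd' : (1 : ℝ) ≤ d := by exact_mod_cast hd
    exact ⟨mul_one_sub_le_of_eq_mul_add_one_sub_rpow hc₀.le hc₁.le hp₀.le hp₁.le
        (one_le_add_one_div_self hd') (add_one_div_self_le_two hd') (hpeq d hd),
      le_of_eq_mul_add_one_sub_rpow hc₀.le hp₀.le hp₁.le (one_le_add_one_div_self hd') (hpeq d hd)⟩
  have hlower : Tendsto (fun d : ℕ => (d : ℝ) * (c d * (1 - c d))) atTop (𝓝 1) := by
    simpa [mul_assoc] using hclim.mul ((tendsto_zero_of_tendsto_natCast_mul hclim).const_sub 1)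
  refine tendsto_of_tendsto_of_tendsto_of_le_of_le' hlower hclim ?_ ?_
  · filter_upwards [eventually_ge_atTop 1] with d hd
    exact mul_le_mul_of_nonneg_left (hbounds d hd).1 d.cast_nonneg
  · filter_upwards [eventually_ge_atTop 1] with d hd
    exact mul_le_mul_of_nonneg_left (hbounds d hd).2 d.cast_nonneg
end
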